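/- arXiv:1608.03758 — 4 statements merged into one kernel-verified Lean document; each statement's English description precedes it below -/
import Mathlib

section
/- Let X, Y, Z be complex Banach spaces and let A : X → Y and B : Y → Z be bounded linear operators with B ∘ A = 0. Then the following two conditions are equivalent: (i) the quotient vector space ker(B)/range(A) is finite-dimensional and range(B) is a closed subspace of Z; (ii) the quotient vector space ker(A*)/range(B*) is finite-dimensional and range(A*) is a closed subspace of X', where A* : Y' → X' and B* : Z' → Y' denote the dual (transpose) operators. -/
/-- The dual (transpose) operator of a bounded linear operator `T : X → Y`,
sending a continuous linear functional `g` on `Y` to `g ∘ T`. -/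
noncomputable def dualOp {X Y : Type*} [NormedAddCommGroup X] [NormedSpace ℂ X]
    [NormedAddCommGroup Y] [NormedSpace ℂ Y] (T : X →L[ℂ] Y) :
    StrongDual ℂ Y →L[ℂ] StrongDual ℂ X :=
  (ContinuousLinearMap.compL ℂ X Y ℂ).flip T

/-!
Evaluation `(f, y) ↦ f y` pairs `ker A*` with `ker B`. It vanishes on `range B* × ker B` and on
`ker A* × range A`, and its kernels are no larger: a functional on `Y` killing `ker B` factors
through `B` once `range B` is closed (open mapping theorem, then Hahn–Banach), and a vector of
`ker B` killed by `ker A*` lies in `range A` once `range A` is closed (Hahn–Banach separation).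
Hence, with the appropriate range closed, each of `ker B / range A` and `ker A* / range B*`
embeds into the algebraic dual of the other, which transfers finite dimensionality.

Closedness is transferred by two facts. A range of finite codimension in a closed subspace is
closed (this applies to `range A ≤ ker B` and `range B* ≤ ker A*`). And by the closed range
theorem `range T` is closed iff `range T*` is. For its hard half, corestrict `T` to
`R = closure (range T)`: the dual of the corestriction is injective with the closed range
`range T*`, hence bounded below; by Hahn–Banach the closure of the image of a ball then contains a
ball of `R`, and the successive approximation argument of the open mapping theorem makes the
corestriction onto `R`.
-/

open Metric Set Function Filter Topology

theorem Submodule.finiteDimensional_quotient_of_ker_le {K M V : Type*} [Field K]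
    [AddCommGroup M] [Module K M] [AddCommGroup V] [Module K V] [FiniteDimensional K V]
    (Φ : M →ₗ[K] V) {p : Submodule K M} (h : LinearMap.ker Φ ≤ p) :
    FiniteDimensional K (M ⧸ p) :=
  have : FiniteDimensional K (M ⧸ LinearMap.ker Φ) := .equiv Φ.quotKerEquivRange.symm
  .of_surjective _ (factor_surjective h)

theorem Submodule.finiteDimensional_quotient_of_pairing {K M N : Type*} [Field K]
    [AddCommGroup M] [Module K M] [AddCommGroup N] [Module K N] (P : M →ₗ[K] N →ₗ[K] K)
    {p : Submodule K M} {q : Submodule K N} [FiniteDimensional K (N ⧸ q)]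
    (hq : ∀ x, q ≤ LinearMap.ker (P x)) (hp : ∀ x, (∀ y, P x y = 0) → x ∈ p) :
    FiniteDimensional K (M ⧸ p) := by
  let Φ : M →ₗ[K] Module.Dual K (N ⧸ q) :=
    q.dualQuotEquivDualAnnihilator.symm.toLinearMap ∘ₗ
      P.codRestrict _ fun x => (mem_dualAnnihilator _).2 fun y hy => hq x hy
  refine finiteDimensional_quotient_of_ker_le Φ fun x hx => hp x fun y => ?_
  have : P x = 0 := by simpa [Φ, Subtype.ext_iff] using hx
  rw [this, LinearMap.zero_apply]

theorem Submodule.exists_dual_eq_zero_of_notMem {𝕜 F : Type*} [RCLike 𝕜]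
    [NormedAddCommGroup F] [NormedSpace 𝕜 F] {M : Submodule 𝕜 F} (hM : IsClosed (M : Set F))
    {y : F} (hy : y ∉ M) :
    ∃ g : StrongDual 𝕜 F, (∀ m ∈ M, g m = 0) ∧ g y ≠ 0 := by
  have : IsClosed (M : Set F) := hM
  obtain ⟨g, hg⟩ := SeparatingDual.exists_ne_zero (R := 𝕜) (x := M.mkQ y)
    (by simpa [Submodule.Quotient.mk_eq_zero] using hy)
  exact ⟨g.comp M.mkQL, fun m hm => by simp [(Submodule.Quotient.mk_eq_zero M).2 hm], hg⟩

namespace ContinuousLinearMap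

section Banach

variable {𝕜 E F : Type*} [NontriviallyNormedField 𝕜]
  [NormedAddCommGroup E] [NormedSpace 𝕜 E] [CompleteSpace E]
  [NormedAddCommGroup F] [NormedSpace 𝕜 F]

theorem surjective_of_approx_preimage (f : E →L[𝕜] F) (C : ℝ)
    (hf : ∀ y, ∃ x, ‖f x - y‖ ≤ ‖y‖ / 2 ∧ ‖x‖ ≤ C * ‖y‖) : Surjective f := by
  choose g hg using hf
  intro y
  -- `r n` is what remains to be hit after `n` corrections; it halves at each step.
  let r : ℕ → F := fun n => (fun z => z - f (g z))^[n] y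
  have hr_succ (n : ℕ) : r (n + 1) = r n - f (g (r n)) := iterate_succ_apply' _ n y
  have hr (n : ℕ) : ‖r n‖ ≤ (1 / 2) ^ n * ‖y‖ := by
    induction n with
    | zero => simp [r]
    | succ n ih =>
      calc ‖r (n + 1)‖ = ‖f (g (r n)) - r n‖ := by rw [hr_succ, norm_sub_rev]
        _ ≤ ‖r n‖ / 2 := (hg _).1
        _ ≤ (1 / 2) ^ (n + 1) * ‖y‖ := by rw [pow_succ]; linarith
  have hg_le (n : ℕ) : ‖g (r n)‖ ≤ max C 0 * ‖y‖ * (1 / 2) ^ n :=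
    calc ‖g (r n)‖ ≤ C * ‖r n‖ := (hg _).2
      _ ≤ max C 0 * ‖r n‖ := by gcongr; exact le_max_left C 0
      _ ≤ max C 0 * ((1 / 2) ^ n * ‖y‖) := by gcongr; exact hr n
      _ = max C 0 * ‖y‖ * (1 / 2) ^ n := by ring
  have hsum : Summable fun n => g (r n) :=
    .of_norm_bounded (summable_geometric_two.mul_left _) hg_le
  have hpartial (n : ℕ) : f (∑ i ∈ Finset.range n, g (r i)) = y - r n := by
    induction n with
    | zero => simp [r]
    | succ n ih => rw [Finset.sum_range_succ, map_add, ih, hr_succ]; abel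
  have hr_lim : Tendsto r atTop (𝓝 0) :=
    squeeze_zero_norm hr (by simpa using
      (tendsto_pow_atTop_nhds_zero_of_lt_one (by norm_num : (0 : ℝ) ≤ 1 / 2)
        (by norm_num)).mul_const ‖y‖)
  refine ⟨∑' n, g (r n), tendsto_nhds_unique ((f.continuous.tendsto _).comp
    hsum.hasSum.tendsto_sum_nat) ?_⟩
  simpa [Function.comp_def, hpartial] using (tendsto_const_nhds (x := y)).sub hr_lim

variable [CompleteSpace 𝕜] [CompleteSpace F]

theorem isClosed_range_of_finiteDimensional_quotient (T : E →L[𝕜] F)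
    [FiniteDimensional 𝕜 (F ⧸ T.range)] : IsClosed (T.range : Set F) := by
  have : IsClosed (T.ker : Set E) := T.isClosed_ker
  let S := T.ker.liftQL T le_rfl
  have hS : S.range = T.range := Submodule.range_liftQ _ _ _
  have : FiniteDimensional 𝕜 (F ⧸ S.range) := hS ▸ ‹_›
  obtain ⟨G, hG⟩ := S.range.exists_isCompl
  have : FiniteDimensional 𝕜 G :=
    (Submodule.quotientEquivOfIsCompl _ G hG).finiteDimensional
  rw [← hS]
  exact S.closed_complemented_range_of_isCompl_of_ker_eq_bot G hG G.closed_of_finiteDimensional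
    (Submodule.ker_liftQ_eq_bot' _ _ rfl)

theorem isClosed_range_of_le_of_finiteDimensional_quotient (T : E →L[𝕜] F)
    {M : Submodule 𝕜 F} (hM : IsClosed (M : Set F)) (hTM : T.range ≤ M)
    [FiniteDimensional 𝕜 (M ⧸ T.range.comap M.subtype)] :
    IsClosed (T.range : Set F) := by
  have : CompleteSpace M := hM.completeSpace_coe
  let T' := T.codRestrict M fun x => hTM ⟨x, rfl⟩
  have hT' : T'.range = T.range.comap M.subtype := by
    ext y; simp [T', Subtype.ext_iff]
  have : FiniteDimensional 𝕜 (M ⧸ T'.range) := hT' ▸ inferInstance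
  have hrange : (T.range : Set F) = (↑) '' (T'.range : Set M) := by
    ext y; simp [T']
  rw [hrange]
  exact hM.isClosedEmbedding_subtypeVal.isClosedMap _
    T'.isClosed_range_of_finiteDimensional_quotient

end Banach

section Dual

variable {E F : Type*} [NormedAddCommGroup E] [NormedSpace ℂ E]
  [NormedAddCommGroup F] [NormedSpace ℂ F]

@[simp]
lemma dualOp_apply (T : E →L[ℂ] F) (g : StrongDual ℂ F) (x : E) : dualOp T g x = g (T x) := rfl

lemma mem_ker_dualOp (T : E →L[ℂ] F) (g : StrongDual ℂ F) :
    g ∈ (dualOp T).ker ↔ ∀ x, g (T x) = 0 := by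
  simp [ContinuousLinearMap.ext_iff]

theorem closedBall_subset_closure_image_closedBall (T : E →L[ℂ] F) {c : ℝ}
    (hc : ∀ g, c * ‖g‖ ≤ ‖dualOp T g‖) {r : ℝ} (hr : 0 < r) :
    closedBall (0 : F) (c * r) ⊆ closure (T '' closedBall 0 r) := by
  intro y hy
  by_contra hyD
  have hD : Convex ℝ (closure (T '' closedBall (0 : E) r)) :=
    ((convex_closedBall 0 r).linear_image (T.toLinearMap.restrictScalars ℝ)).closure
  obtain ⟨g, u, hgD, hgy⟩ :=
    RCLike.geometric_hahn_banach_closed_point (𝕜 := ℂ) hD isClosed_closure hyD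
  -- the closed ball is balanced, so the real-part bound `u` bounds `‖g (T x)‖` on it
  have hbound : ∀ x ∈ closedBall (0 : E) r, ‖dualOp T g x‖ ≤ u := by
    intro x hx
    obtain ⟨a, ha, hax⟩ := RCLike.exists_norm_eq_mul_self (dualOp T g x)
    have hmem : T (a • x) ∈ closure (T '' closedBall 0 r) :=
      subset_closure ⟨a • x, by simpa [norm_smul, ha] using hx, rfl⟩
    have := hgD _ hmem
    rw [map_smul, map_smul, smul_eq_mul, ← dualOp_apply, ← hax] at this
    simpa using this.le
  have hgT : ‖dualOp T g‖ ≤ u / r := opNorm_bound_of_ball_bound hr u _ hbound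
  have : RCLike.re (g y) ≤ u :=
    calc RCLike.re (g y) ≤ ‖g y‖ := RCLike.re_le_norm _
      _ ≤ ‖g‖ * ‖y‖ := g.le_opNorm y
      _ ≤ ‖g‖ * (c * r) := by gcongr; simpa using hy
      _ = c * ‖g‖ * r := by ring
      _ ≤ u / r * r := by gcongr; exact (hc g).trans hgT
      _ = u := div_mul_cancel₀ u hr.ne'
  linarith

theorem surjective_of_mul_norm_le_norm_dualOp [CompleteSpace E] [CompleteSpace F]
    (T : E →L[ℂ] F) {c : ℝ} (hc0 : 0 < c) (hc : ∀ g, c * ‖g‖ ≤ ‖dualOp T g‖) : Surjective T := by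
  refine T.surjective_of_approx_preimage c⁻¹ fun y => ?_
  rcases eq_or_ne y 0 with rfl | hy
  · exact ⟨0, by simp⟩
  have hr : 0 < c⁻¹ * ‖y‖ := by positivity
  have hy' : y ∈ closedBall (0 : F) (c * (c⁻¹ * ‖y‖)) := by
    simp [← mul_assoc, mul_inv_cancel₀ hc0.ne']
  obtain ⟨_, ⟨x, hx, rfl⟩, hxy⟩ := Metric.mem_closure_iff.1
    (T.closedBall_subset_closure_image_closedBall hc hr hy') (‖y‖ / 2) (by positivity)
  exact ⟨x, by rw [← dist_eq_norm, dist_comm]; exact hxy.le, by simpa using hx⟩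

variable [CompleteSpace E] [CompleteSpace F]

theorem exists_dualOp_eq_of_isClosed_range (T : E →L[ℂ] F) (hT : IsClosed (T.range : Set F))
    (g : StrongDual ℂ E) (hg : ∀ x ∈ T.ker, g x = 0) : ∃ h, dualOp T h = g := by
  have : CompleteSpace T.range := hT.completeSpace_coe
  have hsurj : Surjective T.rangeRestrict := T.toLinearMap.surjective_rangeRestrict
  -- `g` factors linearly through the surjection `E → range T`, and continuously since that
  -- surjection is a quotient map by the open mapping theorem
  obtain ⟨φ, hφ⟩ : g.toLinearMap ∈ LinearMap.range T.rangeRestrict.toLinearMap.dualMap := by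
    rw [LinearMap.range_dualMap_eq_dualAnnihilator_ker_of_surjective _ hsurj,
      Submodule.mem_dualAnnihilator]
    intro x hx
    exact hg x (by simpa using hx)
  have hφc : Continuous φ :=
    (T.rangeRestrict.isQuotientMap hsurj).continuous_iff.2 <| by
      convert g.continuous
      exact congrArg DFunLike.coe hφ
  obtain ⟨h, hh, -⟩ := exists_extension_norm_eq T.range ⟨φ, hφc⟩
  exact ⟨h, ext fun x => (hh (T.rangeRestrict x)).trans (LinearMap.congr_fun hφ x)⟩

theorem range_dualOp_eq_of_isClosed_range (T : E →L[ℂ] F) (hT : IsClosed (T.range : Set F)) :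
    ((dualOp T).range : Set (StrongDual ℂ E)) = ⋂ x ∈ T.ker, {g | g x = 0} := by
  ext g
  simp only [SetLike.mem_coe, LinearMap.mem_range, mem_iInter, mem_ofPred_eq]
  refine ⟨?_, T.exists_dualOp_eq_of_isClosed_range hT g⟩
  rintro ⟨h, rfl⟩ x hx
  simp [show T x = 0 from hx]

theorem isClosed_range_dualOp (T : E →L[ℂ] F) (hT : IsClosed (T.range : Set F)) :
    IsClosed ((dualOp T).range : Set (StrongDual ℂ E)) := by
  rw [T.range_dualOp_eq_of_isClosed_range hT]
  exact isClosed_biInter fun x _ => isClosed_eq (apply ℂ ℂ x).continuous continuous_const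

theorem isClosed_range_of_isClosed_range_dualOp (T : E →L[ℂ] F)
    (hT : IsClosed ((dualOp T).range : Set (StrongDual ℂ E))) : IsClosed (T.range : Set F) := by
  set R := T.range.topologicalClosure
  have hR : IsClosed (R : Set F) := T.range.isClosed_topologicalClosure
  have : CompleteSpace R := hR.completeSpace_coe
  let T₁ : E →L[ℂ] R := T.codRestrict R fun x => T.range.le_topologicalClosure ⟨x, rfl⟩
  have hdense : DenseRange T₁ := by
    intro y
    rw [closure_subtype, ← Set.range_comp]
    exact y.2
  have hinj : Injective (dualOp T₁) := fun g₁ g₂ h => DFunLike.coe_injective <|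
    hdense.equalizer g₁.continuous g₂.continuous (funext (DFunLike.congr_fun h))
  -- functionals on `R` extend to `F` by Hahn–Banach, so `T₁` and `T` have the same dual range
  have hrange : Set.range (dualOp T₁) = (dualOp T).range := by
    ext g
    constructor
    · rintro ⟨φ, rfl⟩
      obtain ⟨ψ, hψ, -⟩ := exists_extension_norm_eq R φ
      exact ⟨ψ, ext fun x => hψ (T₁ x)⟩
    · rintro ⟨ψ, rfl⟩
      exact ⟨ψ.comp R.subtypeL, rfl⟩
  obtain ⟨c, hc0, hc⟩ := antilipschitzWith_iff_exists_mul_le_norm.1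
    ((dualOp T₁).antilipschitz_of_injective_of_isClosed_range hinj (hrange ▸ hT))
  have hsurj := T₁.surjective_of_mul_norm_le_norm_dualOp hc0 hc
  have : T.range = R := le_antisymm T.range.le_topologicalClosure fun y hy =>
    (hsurj ⟨y, hy⟩).imp fun x hx => congrArg Subtype.val hx
  rwa [this]

end Dual

section Homology

variable {X Y Z : Type*} [NormedAddCommGroup X] [NormedSpace ℂ X]
  [NormedAddCommGroup Y] [NormedSpace ℂ Y] [NormedAddCommGroup Z] [NormedSpace ℂ Z]

-- `ker (dualOp A)` is a submodule for `ContinuousLinearMap.addCommMonoid`, which the norm-induced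
-- `AddCommGroup (StrongDual ℂ Y)` does not reducibly extend, so without this instance Lean finds
-- no quotient `ker (dualOp A) ⧸ _`.
noncomputable abbrev _root_.StrongDual.addCommGroup : AddCommGroup (StrongDual ℂ Y) :=
  ContinuousLinearMap.addCommGroup

attribute [local instance] StrongDual.addCommGroup

theorem finiteDimensional_dual_homology [CompleteSpace Y] [CompleteSpace Z]
    (A : X →L[ℂ] Y) (B : Y →L[ℂ] Z) (hB : IsClosed (B.range : Set Z))
    [FiniteDimensional ℂ (B.ker ⧸ A.range.comap B.ker.subtype)] :
    FiniteDimensional ℂ ((dualOp A).ker ⧸ (dualOp B).range.comap (dualOp A).ker.subtype) :=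
  Submodule.finiteDimensional_quotient_of_pairing (q := A.range.comap B.ker.subtype)
    ((topDualPairing ℂ Y).compl₁₂ (dualOp A).ker.subtype B.ker.subtype)
    (fun f y hy => by
      obtain ⟨x, hx⟩ := hy
      simpa [← hx] using (mem_ker_dualOp A f).1 f.2 x)
    (fun f hf => B.exists_dualOp_eq_of_isClosed_range hB f fun y hy => hf ⟨y, hy⟩)

theorem finiteDimensional_homology_of_dual (A : X →L[ℂ] Y) (B : Y →L[ℂ] Z)
    (hA : IsClosed (A.range : Set Y))
    [FiniteDimensional ℂ ((dualOp A).ker ⧸ (dualOp B).range.comap (dualOp A).ker.subtype)] :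
    FiniteDimensional ℂ (B.ker ⧸ A.range.comap B.ker.subtype) :=
  Submodule.finiteDimensional_quotient_of_pairing
    (q := (dualOp B).range.comap (dualOp A).ker.subtype)
    ((topDualPairing ℂ Y).compl₁₂ (dualOp A).ker.subtype B.ker.subtype).flip
    (fun y f hf => by
      obtain ⟨g, hg⟩ := hf
      simp [← hg, show B y = 0 from y.2])
    (fun y hy => by
      by_contra hyA
      obtain ⟨g, hgA, hgy⟩ := Submodule.exists_dual_eq_zero_of_notMem hA hyA
      exact hgy (hy ⟨g, (mem_ker_dualOp A g).2 fun x => hgA _ ⟨x, rfl⟩⟩))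

end Homology

end ContinuousLinearMap

/-- For complex Banach spaces `X, Y, Z` and bounded linear operators
`A : X → Y`, `B : Y → Z` with `B ∘ A = 0`, the following are equivalent:
(i) `ker B / range A` is finite-dimensional and `range B` is closed;
(ii) `ker A* / range B*` is finite-dimensional and `range A*` is closed. -/
theorem stmt0 (X Y Z : Type*) [NormedAddCommGroup X] [NormedSpace ℂ X] [CompleteSpace X]
    [NormedAddCommGroup Y] [NormedSpace ℂ Y] [CompleteSpace Y]
    [NormedAddCommGroup Z] [NormedSpace ℂ Z] [CompleteSpace Z]
    (A : X →L[ℂ] Y) (B : Y →L[ℂ] Z) (hBA : B.comp A = 0) :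
    (FiniteDimensional ℂ
        (↥(LinearMap.ker (B : Y →ₗ[ℂ] Z)) ⧸
          Submodule.comap (LinearMap.ker (B : Y →ₗ[ℂ] Z)).subtype (LinearMap.range (A : X →ₗ[ℂ] Y))) ∧
      IsClosed (LinearMap.range (B : Y →ₗ[ℂ] Z) : Set Z)) ↔
    (FiniteDimensional ℂ
        (@HasQuotient.Quotient ↥(LinearMap.ker (dualOp A : StrongDual ℂ Y →ₗ[ℂ] StrongDual ℂ X)) _ (@Submodule.hasQuotient ℂ _ _ _ _)
          (Submodule.comap (LinearMap.ker (dualOp A : StrongDual ℂ Y →ₗ[ℂ] StrongDual ℂ X)).subtype (LinearMap.range (dualOp B : StrongDual ℂ Z →ₗ[ℂ] StrongDual ℂ Y)))) ∧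
      IsClosed (LinearMap.range (dualOp A : StrongDual ℂ Y →ₗ[ℂ] StrongDual ℂ X) : Set (StrongDual ℂ X))) := by
  have hAB : A.range ≤ B.ker := by
    rintro _ ⟨x, rfl⟩
    exact congr($hBA x)
  have hBA_dual : (dualOp B).range ≤ (dualOp A).ker := by
    rintro _ ⟨g, rfl⟩
    exact (A.mem_ker_dualOp _).2 fun x => by simp [← ContinuousLinearMap.comp_apply B A, hBA]
  constructor
  · rintro ⟨hfd, hB⟩
    have hA := A.isClosed_range_of_le_of_finiteDimensional_quotient B.isClosed_ker hAB
    exact ⟨A.finiteDimensional_dual_homology B hB, A.isClosed_range_dualOp hA⟩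
  · rintro ⟨hfd, hA_dual⟩
    have hB_dual := (dualOp B).isClosed_range_of_le_of_finiteDimensional_quotient
      (dualOp A).isClosed_ker hBA_dual
    exact ⟨A.finiteDimensional_homology_of_dual B (A.isClosed_range_of_isClosed_range_dualOp hA_dual),
      B.isClosed_range_of_isClosed_range_dualOp hB_dual⟩
end

section
/- Let X, Y, Z be complex Banach spaces and let A : X → Y and B : Y → Z be bounded linear operators with B ∘ A = 0 and with range(A) closed in Y. Then ker(B) ∩ J⁻¹(range(A**)) = range(A), where J : Y → Y'' is the canonical embedding, and consequently the natural linear map ker(B)/range(A) → ker(B**)/range(A**) induced by J is injective. In particular, if ker(B**)/range(A**) is finite-dimensional, then ker(B)/range(A) is finite-dimensional. -/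
noncomputable instance strongDualAddCommGroupNormed {E : Type*} [NormedAddCommGroup E] [NormedSpace ℂ E] :
    AddCommGroup (StrongDual ℂ E) :=
  NormedAddCommGroup.toAddCommGroup

open NormedSpace

lemma Submodule.exists_strongDual_separating_of_notMem {𝕜 E : Type*} [RCLike 𝕜]
    [NormedAddCommGroup E] [NormedSpace 𝕜 E] {S : Submodule 𝕜 E} [IsClosed (S : Set E)]
    {y : E} (hy : y ∉ S) : ∃ g : StrongDual 𝕜 E, (∀ s ∈ S, g s = 0) ∧ g y ≠ 0 := by
  have hmk : S.mkQ y ≠ 0 := by rwa [ne_eq, mkQ_apply, Quotient.mk_eq_zero]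
  obtain ⟨g, hg⟩ := SeparatingDual.exists_ne_zero (R := 𝕜) hmk
  refine ⟨g.comp ⟨S.mkQ, continuous_quot_mk⟩, fun s hs => ?_, hg⟩
  change g (S.mkQ s) = 0
  rw [mkQ_apply, (Quotient.mk_eq_zero S).2 hs, map_zero]

lemma Submodule.Quotient.injective_of_apply_mk_eq {R M M' : Type*} [Ring R]
    [AddCommGroup M] [Module R M] [AddCommGroup M'] [Module R M']
    {N : Submodule R M} {N' : Submodule R M'} (φ : (M ⧸ N) →ₗ[R] M' ⧸ N') (f : M →ₗ[R] M')
    (hφ : ∀ x, φ (Quotient.mk x) = Quotient.mk (f x)) (hf : N'.comap f ≤ N) :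
    Function.Injective φ := by
  refine (injective_iff_map_eq_zero φ).2 fun q hq => ?_
  induction q using Quotient.induction_on with
  | H x =>
    rw [hφ, Quotient.mk_eq_zero] at hq
    exact (Quotient.mk_eq_zero N).2 (hf hq)

section

variable {X Y Z : Type*} [NormedAddCommGroup X] [NormedSpace ℂ X]
  [NormedAddCommGroup Y] [NormedSpace ℂ Y] [NormedAddCommGroup Z] [NormedSpace ℂ Z]

lemma dualOp_dualOp_inclusionInDoubleDual (T : X →L[ℂ] Y) (x : X) :
    dualOp (dualOp T) (inclusionInDoubleDual ℂ X x) = inclusionInDoubleDual ℂ Y (T x) :=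
  rfl

lemma inclusionInDoubleDual_mem_ker_dualOp_dualOp {B : Y →L[ℂ] Z} {y : Y} (hy : B y = 0) :
    inclusionInDoubleDual ℂ Y y ∈ LinearMap.ker (dualOp (dualOp B)).toLinearMap := by
  rw [LinearMap.mem_ker, ContinuousLinearMap.coe_coe, dualOp_dualOp_inclusionInDoubleDual, hy,
    map_zero]

lemma mem_topologicalClosure_range_of_inclusionInDoubleDual_mem_range (A : X →L[ℂ] Y) {y : Y}
    (hy : inclusionInDoubleDual ℂ Y y ∈ LinearMap.range (dualOp (dualOp A)).toLinearMap) :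
    y ∈ (LinearMap.range (A : X →ₗ[ℂ] Y)).topologicalClosure := by
  obtain ⟨Φ, hΦ⟩ := hy
  by_contra hyA
  have := (LinearMap.range (A : X →ₗ[ℂ] Y)).isClosed_topologicalClosure
  obtain ⟨g, hg, hgy⟩ := Submodule.exists_strongDual_separating_of_notMem hyA
  have hAg : dualOp A g = 0 :=
    ContinuousLinearMap.ext fun x => hg _ (Submodule.le_topologicalClosure _ ⟨x, rfl⟩)
  have hΦg : Φ (dualOp A g) = g y := congr($hΦ g)
  rw [hAg, map_zero] at hΦg
  exact hgy hΦg.symm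

lemma ker_inf_comap_range_dualOp_dualOp {A : X →L[ℂ] Y} {B : Y →L[ℂ] Z} (hBA : B.comp A = 0)
    (hA : IsClosed (LinearMap.range (A : X →ₗ[ℂ] Y) : Set Y)) :
    LinearMap.ker (B : Y →ₗ[ℂ] Z) ⊓
        Submodule.comap (inclusionInDoubleDual ℂ Y).toLinearMap
          (LinearMap.range (dualOp (dualOp A)).toLinearMap) = LinearMap.range (A : X →ₗ[ℂ] Y) := by
  refine le_antisymm ?_ ?_
  · rintro y ⟨-, hy⟩
    rw [← hA.submodule_topologicalClosure_eq]
    exact mem_topologicalClosure_range_of_inclusionInDoubleDual_mem_range A hy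
  · rintro _ ⟨x, rfl⟩
    exact ⟨congr($hBA x), inclusionInDoubleDual ℂ X x, dualOp_dualOp_inclusionInDoubleDual A x⟩

noncomputable def kerInclusionInDoubleDual (B : Y →L[ℂ] Z) :
    LinearMap.ker (B : Y →ₗ[ℂ] Z) →ₗ[ℂ] LinearMap.ker (dualOp (dualOp B)).toLinearMap :=
  LinearMap.codRestrict _ ((inclusionInDoubleDual ℂ Y).toLinearMap ∘ₗ Submodule.subtype _)
    fun y => inclusionInDoubleDual_mem_ker_dualOp_dualOp y.2

end

theorem stmt3_general (X Y Z : Type*) [NormedAddCommGroup X] [NormedSpace ℂ X]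
    [NormedAddCommGroup Y] [NormedSpace ℂ Y]
    [NormedAddCommGroup Z] [NormedSpace ℂ Z]
    (A : X →L[ℂ] Y) (B : Y →L[ℂ] Z) (hBA : B.comp A = 0)
    (hA : IsClosed (LinearMap.range (A : X →ₗ[ℂ] Y) : Set Y)) :
    LinearMap.ker (B : Y →ₗ[ℂ] Z) ⊓
        Submodule.comap (NormedSpace.inclusionInDoubleDual ℂ Y).toLinearMap
          (LinearMap.range (dualOp (dualOp A) : StrongDual ℂ (StrongDual ℂ X) →ₗ[ℂ] StrongDual ℂ (StrongDual ℂ Y))) = LinearMap.range (A : X →ₗ[ℂ] Y) ∧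
    (∀ φ : (↥(LinearMap.ker (B : Y →ₗ[ℂ] Z)) ⧸
              Submodule.comap (LinearMap.ker (B : Y →ₗ[ℂ] Z)).subtype (LinearMap.range (A : X →ₗ[ℂ] Y))) →ₗ[ℂ]
            (↥(LinearMap.ker (dualOp (dualOp B) : StrongDual ℂ (StrongDual ℂ Y) →ₗ[ℂ] StrongDual ℂ (StrongDual ℂ Z))) ⧸
              Submodule.comap (LinearMap.ker (dualOp (dualOp B) : StrongDual ℂ (StrongDual ℂ Y) →ₗ[ℂ] StrongDual ℂ (StrongDual ℂ Z))).subtype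
                (LinearMap.range (dualOp (dualOp A) : StrongDual ℂ (StrongDual ℂ X) →ₗ[ℂ] StrongDual ℂ (StrongDual ℂ Y)))),
      (∀ (x : ↥(LinearMap.ker (B : Y →ₗ[ℂ] Z)))
          (hx : NormedSpace.inclusionInDoubleDual ℂ Y (x : Y) ∈
            LinearMap.ker (dualOp (dualOp B) : StrongDual ℂ (StrongDual ℂ Y) →ₗ[ℂ] StrongDual ℂ (StrongDual ℂ Z))),
        φ (Submodule.Quotient.mk x) =
          Submodule.Quotient.mk ⟨NormedSpace.inclusionInDoubleDual ℂ Y (x : Y), hx⟩) →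
      Function.Injective φ) ∧
    (FiniteDimensional ℂ
        (↥(LinearMap.ker (dualOp (dualOp B) : StrongDual ℂ (StrongDual ℂ Y) →ₗ[ℂ] StrongDual ℂ (StrongDual ℂ Z))) ⧸
          Submodule.comap (LinearMap.ker (dualOp (dualOp B) : StrongDual ℂ (StrongDual ℂ Y) →ₗ[ℂ] StrongDual ℂ (StrongDual ℂ Z))).subtype
            (LinearMap.range (dualOp (dualOp A) : StrongDual ℂ (StrongDual ℂ X) →ₗ[ℂ] StrongDual ℂ (StrongDual ℂ Y)))) →
      FiniteDimensional ℂ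
        (↥(LinearMap.ker (B : Y →ₗ[ℂ] Z)) ⧸
          Submodule.comap (LinearMap.ker (B : Y →ₗ[ℂ] Z)).subtype (LinearMap.range (A : X →ₗ[ℂ] Y)))) := by
  have hker := ker_inf_comap_range_dualOp_dualOp hBA hA
  have hpull : ((LinearMap.range (dualOp (dualOp A)).toLinearMap).comap
      (Submodule.subtype _)).comap (kerInclusionInDoubleDual B) ≤
        (LinearMap.range (A : X →ₗ[ℂ] Y)).comap (Submodule.subtype _) :=
    fun y hy => hker.le ⟨y.2, hy⟩
  have hpush : (LinearMap.range (A : X →ₗ[ℂ] Y)).comap (Submodule.subtype _) ≤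
      ((LinearMap.range (dualOp (dualOp A)).toLinearMap).comap (Submodule.subtype _)).comap
        (kerInclusionInDoubleDual B) :=
    fun y hy => (hker.ge hy).2
  refine ⟨hker, fun φ hφ => Submodule.Quotient.injective_of_apply_mk_eq φ _
    (fun y => hφ y _) hpull, fun _ => ?_⟩
  exact FiniteDimensional.of_injective _
    (Submodule.Quotient.injective_of_apply_mk_eq (Submodule.mapQ _ _ _ hpush) _
      (fun _ => rfl) hpull)

/-- Let `X, Y, Z` be complex Banach spaces, `A : X → Y`, `B : Y → Z`
bounded linear operators with `B ∘ A = 0` and `range A` closed. Then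
`ker B ∩ J⁻¹(range A**) = range A` (where `J` is the canonical embedding into the bidual);
consequently any linear map `ker B / range A → ker B** / range A**` induced by `J` is
injective, and in particular if `ker B** / range A**` is finite-dimensional then so is
`ker B / range A`. -/
theorem stmt3 (X Y Z : Type*) [NormedAddCommGroup X] [NormedSpace ℂ X] [CompleteSpace X]
    [NormedAddCommGroup Y] [NormedSpace ℂ Y] [CompleteSpace Y]
    [NormedAddCommGroup Z] [NormedSpace ℂ Z] [CompleteSpace Z]
    (A : X →L[ℂ] Y) (B : Y →L[ℂ] Z) (hBA : B.comp A = 0)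
    (hA : IsClosed (LinearMap.range (A : X →ₗ[ℂ] Y) : Set Y)) :
    LinearMap.ker (B : Y →ₗ[ℂ] Z) ⊓
        Submodule.comap (NormedSpace.inclusionInDoubleDual ℂ Y).toLinearMap
          (LinearMap.range (dualOp (dualOp A) : StrongDual ℂ (StrongDual ℂ X) →ₗ[ℂ] StrongDual ℂ (StrongDual ℂ Y))) = LinearMap.range (A : X →ₗ[ℂ] Y) ∧
    (∀ φ : (↥(LinearMap.ker (B : Y →ₗ[ℂ] Z)) ⧸
              Submodule.comap (LinearMap.ker (B : Y →ₗ[ℂ] Z)).subtype (LinearMap.range (A : X →ₗ[ℂ] Y))) →ₗ[ℂ]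
            (↥(LinearMap.ker (dualOp (dualOp B) : StrongDual ℂ (StrongDual ℂ Y) →ₗ[ℂ] StrongDual ℂ (StrongDual ℂ Z))) ⧸
              Submodule.comap (LinearMap.ker (dualOp (dualOp B) : StrongDual ℂ (StrongDual ℂ Y) →ₗ[ℂ] StrongDual ℂ (StrongDual ℂ Z))).subtype
                (LinearMap.range (dualOp (dualOp A) : StrongDual ℂ (StrongDual ℂ X) →ₗ[ℂ] StrongDual ℂ (StrongDual ℂ Y)))),
      (∀ (x : ↥(LinearMap.ker (B : Y →ₗ[ℂ] Z)))
          (hx : NormedSpace.inclusionInDoubleDual ℂ Y (x : Y) ∈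
            LinearMap.ker (dualOp (dualOp B) : StrongDual ℂ (StrongDual ℂ Y) →ₗ[ℂ] StrongDual ℂ (StrongDual ℂ Z))),
        φ (Submodule.Quotient.mk x) =
          Submodule.Quotient.mk ⟨NormedSpace.inclusionInDoubleDual ℂ Y (x : Y), hx⟩) →
      Function.Injective φ) ∧
    (FiniteDimensional ℂ
        (↥(LinearMap.ker (dualOp (dualOp B) : StrongDual ℂ (StrongDual ℂ Y) →ₗ[ℂ] StrongDual ℂ (StrongDual ℂ Z))) ⧸
          Submodule.comap (LinearMap.ker (dualOp (dualOp B) : StrongDual ℂ (StrongDual ℂ Y) →ₗ[ℂ] StrongDual ℂ (StrongDual ℂ Z))).subtype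
            (LinearMap.range (dualOp (dualOp A) : StrongDual ℂ (StrongDual ℂ X) →ₗ[ℂ] StrongDual ℂ (StrongDual ℂ Y)))) →
      FiniteDimensional ℂ
        (↥(LinearMap.ker (B : Y →ₗ[ℂ] Z)) ⧸
          Submodule.comap (LinearMap.ker (B : Y →ₗ[ℂ] Z)).subtype (LinearMap.range (A : X →ₗ[ℂ] Y)))) :=
  stmt3_general X Y Z A B hBA hA
end

section
/- Let X₀, X₁, X₂ be complex Banach spaces, let d₂ : X₂ → X₁ and d₁ : X₁ → X₀ be bounded linear operators with d₁ ∘ d₂ = 0, and let h₁ : X₁ → X₂, h₀ : X₀ → X₁ and k₁ : X₁ → X₁ be bounded linear operators satisfying d₂ ∘ h₁ + h₀ ∘ d₁ = Id_{X₁} − k₁, h₁ ∘ h₀ = 0, h₁ ∘ k₁ = 0, k₁ ∘ d₂ = 0, k₁ ∘ k₁ = k₁, and k₁ ∘ h₀ = 0. Then: (i) h₁ ∘ d₂ : X₂ → X₂ is a bounded projection, so X₂ = ker(h₁ ∘ d₂) ⊕ range(h₁ ∘ d₂); (ii) ker(h₁ ∘ d₂) = ker(d₂) and range(h₁ ∘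 d₂) = range(h₁), so X₂ = ker(d₂) ⊕ range(h₁); and (iii) ker(h₁) = range(h₀) ⊕ range(k₁) as an internal direct sum of subspaces of X₁. -/
/-!
Composing the homotopy identity `d₂ h₁ + h₀ d₁ = 1 - k₁` with `d₂` on the right and with `h₁`
on the left shows that `h₁` is a generalized inverse of `d₂`: `d₂ h₁ d₂ = d₂` and
`h₁ d₂ h₁ = h₁`. For such a pair `h₁ d₂` is idempotent, its kernel is `ker d₂` and its range is
`range h₁`, which gives (i) and (ii). For (iii), applying the identity to `x ∈ ker h₁` gives
`x = h₀ (d₁ x) + k₁ x`, while a vector in `range h₀ ∩ range k₁` is fixed by the idempotent `k₁`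
and killed by it, as `k₁ h₀ = 0`.
-/

namespace LinearMap

variable {R M N : Type*} [Ring R] [AddCommGroup M] [AddCommGroup N] [Module R M] [Module R N]

section GeneralizedInverse

variable {f : M →ₗ[R] N} {g : N →ₗ[R] M}

theorem isIdempotentElem_comp_of_comp_comp_eq (hf : f ∘ₗ g ∘ₗ f = f) :
    IsIdempotentElem (g ∘ₗ f) := by
  change g ∘ₗ f ∘ₗ g ∘ₗ f = g ∘ₗ f
  rw [hf]

theorem ker_comp_eq_of_comp_comp_eq (hf : f ∘ₗ g ∘ₗ f = f) : ker (g ∘ₗ f) = ker f :=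
  le_antisymm (fun x hx => by rw [mem_ker, ← hf, comp_apply, hx, map_zero]) (ker_le_ker_comp f g)

theorem range_comp_eq_of_comp_comp_eq (hg : g ∘ₗ f ∘ₗ g = g) : range (g ∘ₗ f) = range g :=
  le_antisymm (range_comp_le_range f g) fun _ ⟨y, hy⟩ => ⟨g y, hy ▸ LinearMap.congr_fun hg y⟩

theorem isCompl_ker_range_of_comp_comp_eq (hf : f ∘ₗ g ∘ₗ f = f) (hg : g ∘ₗ f ∘ₗ g = g) :
    IsCompl (ker f) (range g) := by
  rw [← ker_comp_eq_of_comp_comp_eq hf, ← range_comp_eq_of_comp_comp_eq hg]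
  exact (IsIdempotentElem.isCompl (isIdempotentElem_comp_of_comp_comp_eq hf)).symm

end GeneralizedInverse

theorem disjoint_range_of_comp_eq_zero {P : Type*} [AddCommGroup P] [Module R P]
    {p : M →ₗ[R] M} {f : P →ₗ[R] M} (hp : IsIdempotentElem p) (hpf : p ∘ₗ f = 0) :
    Disjoint (range f) (range p) := by
  rw [Submodule.disjoint_def]
  rintro _ ⟨y, rfl⟩ hy
  rw [← (IsIdempotentElem.mem_range_iff hp).mp hy, ← comp_apply, hpf, zero_apply]

section Homotopy

variable {X₀ X₁ X₂ : Type*} [AddCommGroup X₀] [AddCommGroup X₁] [AddCommGroup X₂]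
  [Module R X₀] [Module R X₁] [Module R X₂]
  {d₂ : X₂ →ₗ[R] X₁} {d₁ : X₁ →ₗ[R] X₀} {h₁ : X₁ →ₗ[R] X₂} {h₀ : X₀ →ₗ[R] X₁} {k₁ : X₁ →ₗ[R] X₁}

theorem comp_comp_eq_self_of_homotopy (hhom : d₂ ∘ₗ h₁ + h₀ ∘ₗ d₁ = id - k₁)
    (hdd : d₁ ∘ₗ d₂ = 0) (hkd : k₁ ∘ₗ d₂ = 0) : d₂ ∘ₗ h₁ ∘ₗ d₂ = d₂ := by
  simpa only [add_comp, sub_comp, comp_assoc, hdd, hkd, comp_zero, add_zero, id_comp, sub_zero]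
    using congrArg (· ∘ₗ d₂) hhom

theorem comp_comp_eq_self_of_homotopy' (hhom : d₂ ∘ₗ h₁ + h₀ ∘ₗ d₁ = id - k₁)
    (hh : h₁ ∘ₗ h₀ = 0) (hhk : h₁ ∘ₗ k₁ = 0) : h₁ ∘ₗ d₂ ∘ₗ h₁ = h₁ := by
  simpa only [comp_add, comp_sub, ← comp_assoc, hh, hhk, zero_comp, add_zero, comp_id, sub_zero]
    using congrArg (h₁ ∘ₗ ·) hhom

theorem ker_eq_range_sup_range_of_homotopy (hhom : d₂ ∘ₗ h₁ + h₀ ∘ₗ d₁ = id - k₁)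
    (hh : h₁ ∘ₗ h₀ = 0) (hhk : h₁ ∘ₗ k₁ = 0) : ker h₁ = range h₀ ⊔ range k₁ := by
  refine le_antisymm (fun x hx => ?_) (sup_le ?_ ?_)
  · have hdecomp : h₀ (d₁ x) + k₁ x = x := by
      simpa [mem_ker.mp hx, eq_sub_iff_add_eq] using LinearMap.congr_fun hhom x
    exact hdecomp ▸ Submodule.add_mem_sup (mem_range_self h₀ _) (mem_range_self k₁ x)
  · rintro _ ⟨y, rfl⟩
    exact LinearMap.congr_fun hh y
  · rintro _ ⟨y, rfl⟩
    exact LinearMap.congr_fun hhk y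

end Homotopy

end LinearMap

theorem stmt8_general (X₀ X₁ X₂ : Type*)
    [NormedAddCommGroup X₀] [NormedSpace ℂ X₀]
    [NormedAddCommGroup X₁] [NormedSpace ℂ X₁]
    [NormedAddCommGroup X₂] [NormedSpace ℂ X₂]
    (d₂ : X₂ →L[ℂ] X₁) (d₁ : X₁ →L[ℂ] X₀)
    (h₁ : X₁ →L[ℂ] X₂) (h₀ : X₀ →L[ℂ] X₁) (k₁ : X₁ →L[ℂ] X₁)
    (hdd : d₁.comp d₂ = 0)
    (hhom : d₂.comp h₁ + h₀.comp d₁ = ContinuousLinearMap.id ℂ X₁ - k₁)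
    (hh : h₁.comp h₀ = 0) (hhk : h₁.comp k₁ = 0) (hkd : k₁.comp d₂ = 0)
    (hkk : k₁.comp k₁ = k₁) (hkh : k₁.comp h₀ = 0) :
    ((h₁.comp d₂).comp (h₁.comp d₂) = h₁.comp d₂ ∧
      IsCompl (LinearMap.ker ((h₁.comp d₂ : X₂ →L[ℂ] X₂) : X₂ →ₗ[ℂ] X₂)) (LinearMap.range ((h₁.comp d₂ : X₂ →L[ℂ] X₂) : X₂ →ₗ[ℂ] X₂))) ∧
    (LinearMap.ker ((h₁.comp d₂ : X₂ →L[ℂ] X₂) : X₂ →ₗ[ℂ] X₂) = LinearMap.ker (d₂ : X₂ →ₗ[ℂ] X₁) ∧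
      LinearMap.range ((h₁.comp d₂ : X₂ →L[ℂ] X₂) : X₂ →ₗ[ℂ] X₂) = LinearMap.range (h₁ : X₁ →ₗ[ℂ] X₂) ∧
      IsCompl (LinearMap.ker (d₂ : X₂ →ₗ[ℂ] X₁)) (LinearMap.range (h₁ : X₁ →ₗ[ℂ] X₂))) ∧
    (LinearMap.ker (h₁ : X₁ →ₗ[ℂ] X₂) = LinearMap.range (h₀ : X₀ →ₗ[ℂ] X₁) ⊔ LinearMap.range (k₁ : X₁ →ₗ[ℂ] X₁) ∧
      Disjoint (LinearMap.range (h₀ : X₀ →ₗ[ℂ] X₁)) (LinearMap.range (k₁ : X₁ →ₗ[ℂ] X₁))) := by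
  replace hdd : (d₁ : X₁ →ₗ[ℂ] X₀) ∘ₗ (d₂ : X₂ →ₗ[ℂ] X₁) = 0 := by exact_mod_cast hdd
  replace hhom : (d₂ : X₂ →ₗ[ℂ] X₁) ∘ₗ (h₁ : X₁ →ₗ[ℂ] X₂) + (h₀ : X₀ →ₗ[ℂ] X₁) ∘ₗ (d₁ : X₁ →ₗ[ℂ] X₀) =
      LinearMap.id - (k₁ : X₁ →ₗ[ℂ] X₁) := by
    simpa only [ContinuousLinearMap.toLinearMap_add, ContinuousLinearMap.toLinearMap_sub,
      ContinuousLinearMap.toLinearMap_comp, ContinuousLinearMap.coe_id]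
      using congrArg ContinuousLinearMap.toLinearMap hhom
  replace hh : (h₁ : X₁ →ₗ[ℂ] X₂) ∘ₗ (h₀ : X₀ →ₗ[ℂ] X₁) = 0 := by exact_mod_cast hh
  replace hhk : (h₁ : X₁ →ₗ[ℂ] X₂) ∘ₗ (k₁ : X₁ →ₗ[ℂ] X₁) = 0 := by exact_mod_cast hhk
  replace hkd : (k₁ : X₁ →ₗ[ℂ] X₁) ∘ₗ (d₂ : X₂ →ₗ[ℂ] X₁) = 0 := by exact_mod_cast hkd
  replace hkk : IsIdempotentElem (k₁ : X₁ →ₗ[ℂ] X₁) := by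
    rw [IsIdempotentElem, Module.End.mul_eq_comp]
    exact_mod_cast hkk
  replace hkh : (k₁ : X₁ →ₗ[ℂ] X₁) ∘ₗ (h₀ : X₀ →ₗ[ℂ] X₁) = 0 := by exact_mod_cast hkh
  have hdhd := LinearMap.comp_comp_eq_self_of_homotopy hhom hdd hkd
  have hhdh := LinearMap.comp_comp_eq_self_of_homotopy' hhom hh hhk
  have hker := LinearMap.ker_comp_eq_of_comp_comp_eq hdhd
  have hrange := LinearMap.range_comp_eq_of_comp_comp_eq hhdh
  have hcompl := LinearMap.isCompl_ker_range_of_comp_comp_eq hdhd hhdh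
  simp only [ContinuousLinearMap.toLinearMap_comp] at hker hrange ⊢
  refine ⟨⟨?_, hker ▸ hrange ▸ hcompl⟩, ⟨hker, hrange, hcompl⟩,
    LinearMap.ker_eq_range_sup_range_of_homotopy hhom hh hhk,
    LinearMap.disjoint_range_of_comp_eq_zero hkk hkh⟩
  exact ContinuousLinearMap.coe_inj.mp (LinearMap.isIdempotentElem_comp_of_comp_comp_eq hdhd)

/-- Let `X₀, X₁, X₂` be complex Banach spaces and let
`d₂ : X₂ → X₁`, `d₁ : X₁ → X₀`, `h₁ : X₁ → X₂`, `h₀ : X₀ → X₁`, `k₁ : X₁ → X₁` be bounded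
linear operators with `d₁ ∘ d₂ = 0`, `d₂ ∘ h₁ + h₀ ∘ d₁ = Id − k₁`, `h₁ ∘ h₀ = 0`,
`h₁ ∘ k₁ = 0`, `k₁ ∘ d₂ = 0`, `k₁ ∘ k₁ = k₁` and `k₁ ∘ h₀ = 0`. Then:
(i) `h₁ ∘ d₂` is a bounded projection, so `X₂ = ker(h₁∘d₂) ⊕ range(h₁∘d₂)`;
(ii) `ker(h₁∘d₂) = ker d₂` and `range(h₁∘d₂) = range h₁`, so `X₂ = ker d₂ ⊕ range h₁`;
(iii) `ker h₁ = range h₀ ⊕ range k₁` as an internal direct sum. -/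
theorem stmt8 (X₀ X₁ X₂ : Type*)
    [NormedAddCommGroup X₀] [NormedSpace ℂ X₀] [CompleteSpace X₀]
    [NormedAddCommGroup X₁] [NormedSpace ℂ X₁] [CompleteSpace X₁]
    [NormedAddCommGroup X₂] [NormedSpace ℂ X₂] [CompleteSpace X₂]
    (d₂ : X₂ →L[ℂ] X₁) (d₁ : X₁ →L[ℂ] X₀)
    (h₁ : X₁ →L[ℂ] X₂) (h₀ : X₀ →L[ℂ] X₁) (k₁ : X₁ →L[ℂ] X₁)
    (hdd : d₁.comp d₂ = 0)
    (hhom : d₂.comp h₁ + h₀.comp d₁ = ContinuousLinearMap.id ℂ X₁ - k₁)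
    (hh : h₁.comp h₀ = 0) (hhk : h₁.comp k₁ = 0) (hkd : k₁.comp d₂ = 0)
    (hkk : k₁.comp k₁ = k₁) (hkh : k₁.comp h₀ = 0) :
    ((h₁.comp d₂).comp (h₁.comp d₂) = h₁.comp d₂ ∧
      IsCompl (LinearMap.ker ((h₁.comp d₂ : X₂ →L[ℂ] X₂) : X₂ →ₗ[ℂ] X₂)) (LinearMap.range ((h₁.comp d₂ : X₂ →L[ℂ] X₂) : X₂ →ₗ[ℂ] X₂))) ∧
    (LinearMap.ker ((h₁.comp d₂ : X₂ →L[ℂ] X₂) : X₂ →ₗ[ℂ] X₂) = LinearMap.ker (d₂ : X₂ →ₗ[ℂ] X₁) ∧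
      LinearMap.range ((h₁.comp d₂ : X₂ →L[ℂ] X₂) : X₂ →ₗ[ℂ] X₂) = LinearMap.range (h₁ : X₁ →ₗ[ℂ] X₂) ∧
      IsCompl (LinearMap.ker (d₂ : X₂ →ₗ[ℂ] X₁)) (LinearMap.range (h₁ : X₁ →ₗ[ℂ] X₂))) ∧
    (LinearMap.ker (h₁ : X₁ →ₗ[ℂ] X₂) = LinearMap.range (h₀ : X₀ →ₗ[ℂ] X₁) ⊔ LinearMap.range (k₁ : X₁ →ₗ[ℂ] X₁) ∧
      Disjoint (LinearMap.range (h₀ : X₀ →ₗ[ℂ] X₁)) (LinearMap.range (k₁ : X₁ →ₗ[ℂ] X₁))) :=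
  stmt8_general X₀ X₁ X₂ d₂ d₁ h₁ h₀ k₁ hdd hhom hh hhk hkd hkk hkh
end

section
/- Let 0 → Xₙ →(dₙ) Xₙ₋₁ → ⋯ → X₁ →(d₁) X₀ → 0 be a complex of complex Banach spaces and bounded linear operators (d_p ∘ d_{p+1} = 0 for all p, with the conventions d₀ = 0 and d_{n+1} = 0), and let 0 ≤ k ≤ n. Suppose the complex is exact in degrees 0, …, k, i.e., range(d_{p+1}) = ker(d_p) for p = 0, …, k (so in particular d₁ is surjective when k ≥ 0), and suppose ker(d_p) admits a closed topological complement in X_p for p = 1, …, k+1. Then there exist bounded linear operators h_p : X_p → X_{p+1} for p = 0, …, k such that, with the convention h₋₁ = 0, d_{p+1} ∘ h_p + h_{p−1} ∘ d_p = Id_{X_p} for every p = 0, …, k, and h_p ∘ h_{p−1} = 0 for every p = 1, …, k. -/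
/-!
Let `R p` be a bounded projection of `X p` onto the boundaries `range (d p)`: the identity for
`p = 0`, where `d 0` is onto, and for `p ≥ 1` a projection onto `ker (d (p - 1)) = range (d p)`
supplied by the complement hypothesis. On `ker R (p + 1)`, a complement of `ker (d p)`, the map
`d p` is injective with closed range `range (d p)`, so by the open mapping theorem it is an
isomorphism onto that range. Its inverse precomposed with `R p` is a bounded `h p` with
`d p ∘ h p = R p`, `h p ∘ d p = 1 - R (p + 1)` and values in `ker R (p + 1)`. Adding the first
identity in degree `p + 1` to the second gives the homotopy equation, and
`h (p + 1) ∘ h p = h (p + 1) ∘ R (p + 1) ∘ h p = 0`.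
-/

open LinearMap (IsProj)

theorem exists_pi_of_forall_mem_exists {ι : Type*} {α : ι → Type*} [∀ i, Nonempty (α i)]
    {s : Set ι} {q : ∀ i, α i → Prop} (h : ∀ i ∈ s, ∃ a, q i a) :
    ∃ f : ∀ i, α i, ∀ i ∈ s, q i (f i) := by
  classical
  refine ⟨fun i => if hi : i ∈ s then (h i hi).choose else Classical.arbitrary _, fun i hi => ?_⟩
  simpa only [dif_pos hi] using (h i hi).choose_spec

theorem Submodule.ClosedComplemented.exists_isProj {R M : Type*} [Ring R] [AddCommGroup M]
    [Module R M] [TopologicalSpace M] {m : Submodule R M} (hm : m.ClosedComplemented) :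
    ∃ P : M →L[R] M, IsProj m P := by
  obtain ⟨f, hf⟩ := hm
  exact ⟨m.subtypeL.comp f, fun x => (f x).2, fun x hx => congrArg Subtype.val (hf ⟨x, hx⟩)⟩

theorem ContinuousLinearMap.exists_generalizedInverse_of_isProj {𝕜 E F : Type*}
    [NontriviallyNormedField 𝕜] [NormedAddCommGroup E] [NormedSpace 𝕜 E] [CompleteSpace E]
    [NormedAddCommGroup F] [NormedSpace 𝕜 F] [CompleteSpace F] (T : E →L[𝕜] F)
    {P : E →L[𝕜] E} {Q : F →L[𝕜] F} (hP : IsProj T.ker P) (hQ : IsProj T.range Q) :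
    ∃ S : F →L[𝕜] E, T.comp S = Q ∧ S.comp T = ContinuousLinearMap.id 𝕜 E - P ∧
      P.comp S = 0 ∧ S.comp Q = S := by
  set K := P.ker
  have : CompleteSpace K := P.isClosed_ker.completeSpace_coe
  set T₀ := T.comp K.subtypeL
  have hT₀ : ∀ x, T₀ ⟨x - P x, by simp [K, hP.map_id _ (hP.map_mem x)]⟩ = T x := fun x => by
    simp [T₀, show T (P x) = 0 from hP.map_mem x]
  have hinj : Function.Injective T₀ := by
    refine (injective_iff_map_eq_zero T₀).2 fun ⟨x, hx⟩ hTx => Subtype.ext ?_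
    exact (hP.map_id x hTx).symm.trans hx
  have hrange : Set.range T₀ = {y | Q y = y} := by
    ext y
    refine ⟨?_, fun hy => ?_⟩
    · rintro ⟨x, rfl⟩
      exact hQ.map_id _ ⟨x, rfl⟩
    · obtain ⟨x, hx⟩ := hy ▸ hQ.map_mem y
      exact ⟨_, (hT₀ x).trans hx⟩
  let e := T₀.equivRange hinj (hrange ▸ isClosed_eq Q.continuous continuous_id)
  have hQmem : ∀ y, Q y ∈ T₀.range := fun y => by
    rw [LinearMap.mem_range, ← Set.mem_range, ContinuousLinearMap.coe_coe, hrange]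
    exact hQ.map_id _ (hQ.map_mem y)
  let S := K.subtypeL.comp (e.symm.toContinuousLinearMap.comp (Q.codRestrict _ hQmem))
  have hTS : ∀ y, T (S y) = Q y := fun y =>
    congrArg Subtype.val (e.apply_symm_apply ⟨Q y, hQmem y⟩)
  refine ⟨S, ContinuousLinearMap.ext hTS, ContinuousLinearMap.ext fun x => ?_,
    ContinuousLinearMap.ext fun y => (e.symm _).2, ContinuousLinearMap.ext fun y => ?_⟩
  · show ((e.symm _ : K) : E) = x - P x
    rw [e.symm_apply_eq.2 (Subtype.ext ((hQ.map_id _ ⟨x, rfl⟩).trans (hT₀ x).symm))]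
  · exact congrArg (fun z => ((e.symm z : K) : E)) (Subtype.ext (hQ.map_id _ (hQ.map_mem y)))

theorem stmt10_general (k : ℕ)
    (X : ℕ → Type*) [∀ p, NormedAddCommGroup (X p)] [∀ p, NormedSpace ℂ (X p)]
    [∀ p, CompleteSpace (X p)]
    (d : ∀ p : ℕ, X (p + 1) →L[ℂ] X p)
    (hexact0 : LinearMap.range (d 0 : X (0 + 1) →ₗ[ℂ] X 0) = ⊤)
    (hexact : ∀ p, p < k → LinearMap.range (d (p + 1) : X (p + 1 + 1) →ₗ[ℂ] X (p + 1)) = LinearMap.ker (d p : X (p + 1) →ₗ[ℂ] X p))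
    (hcompl : ∀ p, p ≤ k → Submodule.ClosedComplemented (LinearMap.ker (d p : X (p + 1) →ₗ[ℂ] X p))) :
    ∃ h : ∀ p : ℕ, X p →L[ℂ] X (p + 1),
      (d 0).comp (h 0) = ContinuousLinearMap.id ℂ (X 0) ∧
      (∀ p, p < k →
        (d (p + 1)).comp (h (p + 1)) + (h p).comp (d p) =
          ContinuousLinearMap.id ℂ (X (p + 1))) ∧
      (∀ p, p < k → (h (p + 1)).comp (h p) = 0) := by
  obtain ⟨P, hP⟩ : ∃ P : ∀ p, X (p + 1) →L[ℂ] X (p + 1), ∀ p ≤ k, IsProj (d p).ker (P p) :=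
    exists_pi_of_forall_mem_exists fun p hp => (hcompl p hp).exists_isProj
  let R : ∀ p, X p →L[ℂ] X p := fun | 0 => .id ℂ _ | p + 1 => P p
  have hR : ∀ p ≤ k, IsProj (d p).range (R p) := by
    rintro (_ | p) hp
    · rw [hexact0]
      exact ⟨fun _ => trivial, fun _ _ => rfl⟩
    · rw [hexact p hp]
      exact hP p (Nat.le_of_succ_le hp)
  obtain ⟨h, hh⟩ := exists_pi_of_forall_mem_exists (s := Set.Iic k) fun p hp =>
    (d p).exists_generalizedInverse_of_isProj (hP p hp) (hR p hp)
  refine ⟨h, (hh 0 k.zero_le).1, fun p hp => ?_, fun p hp => ?_⟩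
  · rw [(hh (p + 1) hp).1, (hh p hp.le).2.1]
    exact add_sub_cancel _ _
  · rw [← (hh (p + 1) hp).2.2.2, ContinuousLinearMap.comp_assoc, (hh p hp.le).2.2.1,
      ContinuousLinearMap.comp_zero]

/-- Let `0 → Xₙ → ⋯ → X₀ → 0` be a complex of complex Banach spaces and
bounded linear operators (here `d p : X (p+1) → X p` plays the role of `d_{p+1}`, with
`d p = 0` for `p ≥ n` encoding the conventions `d₀ = 0`, `d_{n+1} = 0`), and let
`0 ≤ k ≤ n`. If the complex is exact in degrees `0, …, k` and `ker d_p` admits a closed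
topological complement for `p = 1, …, k+1`, then there are bounded operators
`h_p : X_p → X_{p+1}` (`p = 0, …, k`) with `d_{p+1} ∘ h_p + h_{p-1} ∘ d_p = Id` for
`p = 0, …, k` (with `h₋₁ = 0`) and `h_p ∘ h_{p-1} = 0` for `p = 1, …, k`. -/
theorem stmt10 (n k : ℕ) (hkn : k ≤ n)
    (X : ℕ → Type*) [∀ p, NormedAddCommGroup (X p)] [∀ p, NormedSpace ℂ (X p)]
    [∀ p, CompleteSpace (X p)]
    (d : ∀ p : ℕ, X (p + 1) →L[ℂ] X p)
    (hcomplex : ∀ p, (d p).comp (d (p + 1)) = 0)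
    (hzero : ∀ p, n ≤ p → d p = 0)
    (hexact0 : LinearMap.range (d 0 : X (0 + 1) →ₗ[ℂ] X 0) = ⊤)
    (hexact : ∀ p, p < k → LinearMap.range (d (p + 1) : X (p + 1 + 1) →ₗ[ℂ] X (p + 1)) = LinearMap.ker (d p : X (p + 1) →ₗ[ℂ] X p))
    (hcompl : ∀ p, p ≤ k → Submodule.ClosedComplemented (LinearMap.ker (d p : X (p + 1) →ₗ[ℂ] X p))) :
    ∃ h : ∀ p : ℕ, X p →L[ℂ] X (p + 1),
      (d 0).comp (h 0) = ContinuousLinearMap.id ℂ (X 0) ∧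
      (∀ p, p < k →
        (d (p + 1)).comp (h (p + 1)) + (h p).comp (d p) =
          ContinuousLinearMap.id ℂ (X (p + 1))) ∧
      (∀ p, p < k → (h (p + 1)).comp (h p) = 0) :=
  stmt10_general k X d hexact0 hexact hcompl
end
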